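/- For every complex s with Re(s) > 3/2, the series ∑_{n=0}^∞ binom(1/2, n)·(-1)^n/(3/2 - n - s) converges absolutely and equals (√π/2)·Γ(s - 1/2)/((3/2 - s)·Γ(s)). -/

import Mathlib

/-!
For `0 < a ≤ 1` and `Re u > 0`, expand `(1 - t) ^ a = ∑ C(a, n) (-t) ^ n`, multiply by `t ^ (u - 1)`
and integrate termwise over `[0, 1]`: since `∫₀¹ t ^ (n + u - 1) = 1 / (n + u)`, this gives
`∑ C(a, n) (-1) ^ n / (n + u) = B(u, a + 1)`. Termwise integration is legitimate because
`∑ |C(a, n)| ≤ 2`: the terms `b n = (-1) ^ n C(a, n)` are `≤ 0` for `n ≥ 1`, while the partial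
sums satisfy `a ∑_{n<N} b n = -N b N ≥ 0`. The theorem is the case
`a = 1/2`, `u = s - 3/2`, evaluated with `B(u, v) = Γ(u) Γ(v) / Γ(u + v)`, `Γ(3/2) = √π / 2` and
`Γ(s - 1/2) = (s - 3/2) Γ(s - 3/2)`.
-/

open Complex

/-- The generalized binomial coefficient `(1/2 choose n)` as a complex number. -/

noncomputable def halfChoose (n : ℕ) : ℂ :=
  (∏ i ∈ Finset.range n, ((1 : ℂ)/2 - i)) / (n.factorial : ℂ)

open Finset Nat MeasureTheory

section Field

variable {K : Type*} [Field K] [CharZero K]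

theorem Ring.choose_eq_prod_range_div (a : K) (n : ℕ) :
    Ring.choose a n = (∏ i ∈ range n, (a - i)) / n ! := by
  rw [Ring.choose_eq_smul, ← descPochhammer_eval_eq_prod_range, smul_eq_mul, div_eq_inv_mul,
    ← descPochhammer_map (algebraMap ℤ K), Polynomial.eval_map_algebraMap,
    Polynomial.aeval_eq_smeval]

theorem Ring.succ_mul_choose_succ (a : K) (n : ℕ) :
    (n + 1) * Ring.choose a (n + 1) = (a - n) * Ring.choose a n := by
  simp only [Ring.choose_eq_prod_range_div, prod_range_succ, factorial_succ]
  push_cast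
  field_simp

theorem mul_sum_range_neg_one_pow_mul_choose (a : K) (N : ℕ) :
    a * ∑ n ∈ range N, (-1) ^ n * Ring.choose a n = -(N * ((-1) ^ N * Ring.choose a N)) := by
  induction N with
  | zero => simp
  | succ N ih =>
    rw [sum_range_succ, mul_add, ih, pow_succ]
    push_cast
    linear_combination -(-1) ^ N * Ring.succ_mul_choose_succ a N

end Field

theorem neg_one_pow_mul_choose_nonpos {a : ℝ} (ha₀ : 0 ≤ a) (ha₁ : a ≤ 1) {n : ℕ} (hn : 1 ≤ n) :
    (-1) ^ n * Ring.choose a n ≤ 0 := by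
  induction n, hn using Nat.le_induction with
  | base => simpa [Ring.choose_one_right] using ha₀
  | succ n hn ih =>
    have hrec : ((n : ℝ) + 1) * ((-1) ^ (n + 1) * Ring.choose a (n + 1)) =
        (n - a) * ((-1) ^ n * Ring.choose a n) := by
      rw [pow_succ]
      linear_combination -(-1) ^ n * Ring.succ_mul_choose_succ a n
    have ha : a ≤ n := ha₁.trans (by exact_mod_cast hn)
    have hprod : ((n : ℝ) + 1) * ((-1) ^ (n + 1) * Ring.choose a (n + 1)) ≤ 0 :=
      hrec ▸ mul_nonpos_of_nonneg_of_nonpos (sub_nonneg.2 ha) ih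
    exact nonpos_of_mul_nonpos_right hprod (by positivity)

theorem summable_abs_choose {a : ℝ} (ha₀ : 0 < a) (ha₁ : a ≤ 1) :
    Summable fun n => |Ring.choose a n| := by
  refine summable_of_sum_range_le (c := 2) (fun _ => abs_nonneg _) fun N => ?_
  cases N with
  | zero => simp
  | succ N =>
    have habs (n : ℕ) : |Ring.choose a (n + 1)| = -((-1) ^ (n + 1) * Ring.choose a (n + 1)) := by
      rw [← abs_of_nonpos (neg_one_pow_mul_choose_nonpos ha₀.le ha₁ le_add_self), abs_mul,
        abs_neg_one_pow, one_mul]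
    have hpartial : 0 ≤ ∑ n ∈ range (N + 1), (-1) ^ n * Ring.choose a n := by
      refine (mul_nonneg_iff_of_pos_left ha₀).1 ?_
      rw [mul_sum_range_neg_one_pow_mul_choose, neg_nonneg]
      exact mul_nonpos_of_nonneg_of_nonpos (by positivity)
        (neg_one_pow_mul_choose_nonpos ha₀.le ha₁ le_add_self)
    rw [sum_range_succ'] at hpartial ⊢
    simp only [habs, sum_neg_distrib, Ring.choose_zero_right, pow_zero, one_mul, abs_one]
      at hpartial ⊢
    linarith

theorem Complex.hasSum_choose_mul_pow (a : ℂ) {z : ℂ} (hz : ‖z‖ < 1) :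
    HasSum (fun n => Ring.choose a n * z ^ n) ((1 + z) ^ a) := by
  have := (one_add_cpow_hasFPowerSeriesOnBall_zero (a := a)).hasSum (y := z)
    (by simpa [← ofReal_norm] using hz)
  simpa [binomialSeries, FormalMultilinearSeries.ofScalars_apply_eq, mul_comm] using this

theorem summable_norm_choose_ofReal_mul_neg_one_pow {a : ℝ} (ha₀ : 0 < a) (ha₁ : a ≤ 1) :
    Summable fun n => ‖Ring.choose (a : ℂ) n * (-1) ^ n‖ := by
  simpa [← Complex.ofReal_choose] using summable_abs_choose ha₀ ha₁

theorem summable_norm_choose_ofReal_mul_neg_one_pow_div {a : ℝ} (ha₀ : 0 < a) (ha₁ : a ≤ 1)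
    {u : ℂ} (hu : 0 < u.re) :
    Summable fun n : ℕ => ‖Ring.choose (a : ℂ) n * (-1) ^ n / (n + u)‖ := by
  refine ((summable_norm_choose_ofReal_mul_neg_one_pow ha₀ ha₁).div_const u.re).of_nonneg_of_le
    (fun _ => norm_nonneg _) fun n => ?_
  rw [norm_div]
  refine div_le_div_of_nonneg_left (norm_nonneg _) hu ?_
  calc u.re ≤ (n + u).re := by simp
    _ ≤ ‖(n : ℂ) + u‖ := re_le_norm _

theorem integral_cpow_sub_one {u : ℂ} (hu : 0 < u.re) :
    ∫ t : ℝ in 0..1, (t : ℂ) ^ (u - 1) = 1 / u := by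
  rw [integral_cpow (Or.inl (by simpa using hu)), sub_add_cancel, ofReal_one, one_cpow,
    ofReal_zero, zero_cpow (ne_of_apply_ne re hu.ne'), sub_zero]

theorem hasSum_choose_mul_neg_one_pow_mul_cpow (a u : ℂ) {t : ℝ} (ht₀ : 0 < t) (ht₁ : t < 1) :
    HasSum (fun n : ℕ => Ring.choose a n * (-1) ^ n * (t : ℂ) ^ ((n : ℂ) + u - 1))
      ((t : ℂ) ^ (u - 1) * (1 - t) ^ a) := by
  have ht : (t : ℂ) ≠ 0 := ofReal_ne_zero.2 ht₀.ne'
  have hsplit (n : ℕ) : Ring.choose a n * (-1) ^ n * (t : ℂ) ^ ((n : ℂ) + u - 1) =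
      (t : ℂ) ^ (u - 1) * (Ring.choose a n * (-t : ℂ) ^ n) := by
    rw [add_sub_assoc, cpow_add _ _ ht, cpow_natCast, neg_pow]
    ring
  simp_rw [hsplit, sub_eq_add_neg (1 : ℂ)]
  refine (hasSum_choose_mul_pow a ?_).mul_left _
  rwa [norm_neg, norm_real, Real.norm_of_nonneg ht₀.le]

theorem hasSum_choose_ofReal_mul_neg_one_pow_div_betaIntegral {a : ℝ} (ha₀ : 0 < a)
    (ha₁ : a ≤ 1) {u : ℂ} (hu : 0 < u.re) :
    HasSum (fun n : ℕ => Ring.choose (a : ℂ) n * (-1) ^ n / (n + u))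
      (betaIntegral u (a + 1)) := by
  have hre (n : ℕ) : 0 < ((n : ℂ) + u).re := by
    simp only [add_re, natCast_re]
    positivity
  have hint (n : ℕ) :
      ∫ t : ℝ in 0..1, Ring.choose (a : ℂ) n * (-1) ^ n * (t : ℂ) ^ ((n : ℂ) + u - 1) =
        Ring.choose (a : ℂ) n * (-1) ^ n / (n + u) := by
    rw [intervalIntegral.integral_const_mul, integral_cpow_sub_one (hre n), mul_one_div]
  simp_rw [← hint, betaIntegral, add_sub_cancel_right]
  refine intervalIntegral.hasSum_integral_of_dominated_convergence
    (fun n t => ‖Ring.choose (a : ℂ) n * (-1) ^ n‖ * t ^ (u.re - 1))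
    (fun n => ?_) (fun n => ?_) ?_ ?_ ?_
  · have hexp : -1 < ((n : ℂ) + u - 1).re := by simpa using hre n
    exact ((intervalIntegral.intervalIntegrable_cpow' hexp).const_mul _).def'.aestronglyMeasurable
  · refine .of_forall fun t ht => ?_
    rw [Set.uIoc_of_le zero_le_one] at ht
    rw [norm_mul, norm_cpow_eq_rpow_re_of_pos ht.1]
    exact mul_le_mul_of_nonneg_left
      (Real.rpow_le_rpow_of_exponent_ge ht.1 ht.2 (by simp)) (norm_nonneg _)
  · exact .of_forall fun t _ => (summable_norm_choose_ofReal_mul_neg_one_pow ha₀ ha₁).mul_right _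
  · simp_rw [tsum_mul_right]
    exact (intervalIntegral.intervalIntegrable_rpow' (by linarith)).const_mul _
  · filter_upwards [measure_eq_zero_iff_ae_notMem.mp (measure_singleton (1 : ℝ))] with t ht₁ ht
    rw [Set.uIoc_of_le zero_le_one] at ht
    exact hasSum_choose_mul_neg_one_pow_mul_cpow _ u ht.1 (ht.2.lt_of_ne ht₁)

theorem Complex.Gamma_three_halves : Gamma (3 / 2) = √Real.pi / 2 := by
  have h := congr_arg ((↑) : ℝ → ℂ) (Real.Gamma_nat_add_one_add_half 0)
  rw [← Gamma_ofReal] at h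
  norm_num at h
  exact h

theorem halfChoose_eq_choose (n : ℕ) : halfChoose n = Ring.choose ((1 / 2 : ℝ) : ℂ) n := by
  rw [halfChoose, Ring.choose_eq_prod_range_div]
  push_cast
  rfl

/-- For `Re(s) > 3/2`, `∑ binom(1/2,n)(-1)ⁿ/(3/2-n-s)` converges absolutely and equals
`(√π/2)·Γ(s-1/2)/((3/2-s)Γ(s))`. -/
theorem binom_sum_identity (s : ℂ) (hs : 3/2 < s.re) :
    Summable (fun n : ℕ => ‖halfChoose n * (-1)^n / (3/2 - n - s)‖) ∧
    ∑' n : ℕ, halfChoose n * (-1)^n / (3/2 - n - s) =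
      (Real.sqrt Real.pi / 2) * Complex.Gamma (s - 1/2) /
        ((3/2 - s) * Complex.Gamma s) := by
  have hu : 0 < (s - 3 / 2).re := by simpa using hs
  have hu₀ : s - 3 / 2 ≠ 0 := ne_of_apply_ne re hu.ne'
  have hterm (n : ℕ) : halfChoose n * (-1) ^ n / (3 / 2 - n - s) =
      -(Ring.choose ((1 / 2 : ℝ) : ℂ) n * (-1) ^ n / (n + (s - 3 / 2))) := by
    rw [halfChoose_eq_choose, ← div_neg]
    ring_nf
  simp_rw [hterm, norm_neg]
  refine ⟨summable_norm_choose_ofReal_mul_neg_one_pow_div (by norm_num) (by norm_num) hu, ?_⟩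
  rw [(hasSum_choose_ofReal_mul_neg_one_pow_div_betaIntegral (by norm_num) (by norm_num)
    hu).neg.tsum_eq, show ((1 / 2 : ℝ) : ℂ) + 1 = 3 / 2 by norm_num]
  have hbeta := Gamma_mul_Gamma_eq_betaIntegral hu (by norm_num : 0 < (3 / 2 : ℂ).re)
  rw [sub_add_cancel, Gamma_three_halves] at hbeta
  have hrec : Gamma (s - 1 / 2) = (s - 3 / 2) * Gamma (s - 3 / 2) := by
    rw [← Gamma_add_one _ hu₀]
    ring_nf
  have hΓ : Gamma s ≠ 0 := Gamma_ne_zero_of_re_pos (by linarith)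
  have hs' : (3 / 2 : ℂ) - s ≠ 0 := by
    rwa [← neg_sub, neg_ne_zero]
  rw [hrec, eq_div_iff (mul_ne_zero hs' hΓ)]
  linear_combination (3 / 2 - s) * hbeta
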